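/- arXiv:2007.06821 — 6 statements merged into one kernel-verified Lean document; each statement's English description precedes it below -/
import Mathlib

section
/- For any two elements a, b in the field K = F_{2^τ}((π)) of Laurent series over a finite field of characteristic 2, the Artin–Schreier defect satisfies D(a+b) ⊆ D(a) + D(b), where D(a) is defined as the intersection over all h ∈ K of the fractional ideals generated by h² + h + a. -/
noncomputable section

/-- The finite field with `2 ^ τ` elements. -/
abbrev Fq (τ : ℕ) := GaloisField 2 τ

/-- The field of formal Laurent series `K = F_{2^τ}((π))`. -/
abbrev Kk (τ : ℕ) := LaurentSeries (Fq τ)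

/-- The ring of integers `O = F_{2^τ}[[π]]`. -/
abbrev Ok (τ : ℕ) := PowerSeries (Fq τ)

/-- The Artin–Schreier defect `D(a) = ⋂_{h ∈ K} (h² + h + a)`, an intersection of
principal fractional `O`-ideals (as `O`-submodules of `K`). -/
def ASdefect (τ : ℕ) (a : Kk τ) : Submodule (Ok τ) (Kk τ) :=
  ⨅ h : Kk τ, Submodule.span (Ok τ) {h ^ 2 + h + a}

/-- Submodules of the fraction field of a valuation ring are totally ordered. -/
lemma submodule_le_total {A K : Type*} [CommRing A] [IsDomain A] [ValuationRing A]
    [Field K] [Algebra A K] [IsFractionRing A K] (M N : Submodule A K) :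
    M ≤ N ∨ N ≤ M := by
  by_contra hc
  push_neg at hc
  obtain ⟨h1, h2⟩ := hc
  rw [SetLike.not_le_iff_exists] at h1 h2
  obtain ⟨x, hxM, hxN⟩ := h1
  obtain ⟨y, hyN, hyM⟩ := h2
  have hx0 : x ≠ 0 := fun h => hxN (h ▸ N.zero_mem)
  have hy0 : y ≠ 0 := fun h => hyM (h ▸ M.zero_mem)
  rcases ValuationRing.isInteger_or_isInteger A (x / y) with ⟨c, hc⟩ | ⟨c, hc⟩
  · -- x / y = c, so x = c • y ∈ N
    apply hxN
    have : x = c • y := by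
      rw [Algebra.smul_def, hc, div_mul_cancel₀ _ hy0]
    exact this ▸ N.smul_mem c hyN
  · -- (x / y)⁻¹ = y / x = c, so y = c • x ∈ M
    apply hyM
    rw [inv_div] at hc
    have : y = c • x := by
      rw [Algebra.smul_def, hc, div_mul_cancel₀ _ hx0]
    exact this ▸ M.smul_mem c hxM

lemma two_eq_zero_Kk (τ : ℕ) : (2 : Kk τ) = 0 := by
  have h2 : (2 : Fq τ) = 0 := by
    have := CharP.cast_eq_zero (GaloisField 2 τ) 2
    simpa using this
  calc (2 : Kk τ) = algebraMap (Fq τ) (Kk τ) 2 := by rw [map_ofNat]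
    _ = 0 := by rw [h2, map_zero]

/-- `D(a + b) ⊆ D(a) + D(b)` for all `a, b ∈ K`. -/
theorem ASdefect_add_subset (τ : ℕ) (hτ : 0 < τ) (a b : Kk τ) :
    ASdefect τ (a + b) ≤ ASdefect τ a ⊔ ASdefect τ b := by
  classical
  set DA := ASdefect τ a
  set DB := ASdefect τ b
  -- Key pointwise estimate:
  have key : ∀ h g : Kk τ, ASdefect τ (a + b) ≤
      Submodule.span (Ok τ) {h ^ 2 + h + a} ⊔ Submodule.span (Ok τ) {g ^ 2 + g + b} := by
    intro h g
    have hle : ASdefect τ (a + b) ≤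
        Submodule.span (Ok τ) {(h + g) ^ 2 + (h + g) + (a + b)} := iInf_le _ (h + g)
    refine hle.trans ?_
    rw [Submodule.span_le]
    intro x hx
    rw [Set.mem_singleton_iff] at hx
    subst hx
    have hid : (h + g) ^ 2 + (h + g) + (a + b) = (h ^ 2 + h + a) + (g ^ 2 + g + b) := by
      have h2 := two_eq_zero_Kk τ
      ring_nf
      rw [show h * g * 2 = 0 by rw [h2]; ring]
      ring
    rw [hid]
    exact Submodule.add_mem_sup (Submodule.mem_span_singleton_self _)
      (Submodule.mem_span_singleton_self _)
  -- Total order argument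
  by_contra hcon
  have hA : ¬ ASdefect τ (a + b) ≤ DA := fun h => hcon (h.trans le_sup_left)
  have hB : ¬ ASdefect τ (a + b) ≤ DB := fun h => hcon (h.trans le_sup_right)
  have hA' : ∃ h : Kk τ, ¬ ASdefect τ (a + b) ≤ Submodule.span (Ok τ) {h ^ 2 + h + a} := by
    by_contra hh
    push_neg at hh
    exact hA (le_iInf hh)
  have hB' : ∃ g : Kk τ, ¬ ASdefect τ (a + b) ≤ Submodule.span (Ok τ) {g ^ 2 + g + b} := by
    by_contra hh
    push_neg at hh
    exact hB (le_iInf hh)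
  obtain ⟨h, hh⟩ := hA'
  obtain ⟨g, hg⟩ := hB'
  have hAle : Submodule.span (Ok τ) {h ^ 2 + h + a} ≤ ASdefect τ (a + b) :=
    (submodule_le_total _ _).resolve_left hh
  have hBle : Submodule.span (Ok τ) {g ^ 2 + g + b} ≤ ASdefect τ (a + b) :=
    (submodule_le_total _ _).resolve_left hg
  rcases submodule_le_total (Submodule.span (Ok τ) {h ^ 2 + h + a})
      (Submodule.span (Ok τ) {g ^ 2 + g + b}) with hle | hle
  · exact hg ((key h g).trans (sup_le hle le_rfl))
  · exact hh ((key h g).trans (sup_le le_rfl hle))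
end
end

section
/- For every a ∈ K = F_{2^τ}((π)) there exists h ∈ K such that the Artin–Schreier defect D(a) equals the principal fractional ideal generated by h² + h + a; i.e., the infimum defining D(a) is attained. -/
/-! In characteristic 2 the map `℘ h = h² + h` is additive, and by Hensel's lemma every Laurent
series of positive order lies in `℘ K`. So the values `℘ h + a`, which form the coset `a + ℘ K`,
either contain `0` or all have order `≤ 0`; in the latter case a value of greatest order generates
the smallest of the ideals `(℘ h + a)`, which is therefore their intersection. -/

noncomputable section

open PowerSeries LaurentSeries

theorem PowerSeries.exists_sq_add_self_eq {R : Type*} [CommRing R] {M : R⟦X⟧}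
    (hM : constantCoeff M = 0) : ∃ g : R⟦X⟧, g ^ 2 + g = M := by
  obtain ⟨g, hg, -⟩ := HenselianRing.is_henselian (I := Ideal.span {X})
    (Polynomial.X ^ 2 + Polynomial.X - Polynomial.C M) (by monicity!) 0
    (by simpa [Ideal.mem_span_singleton] using X_dvd_iff.mpr hM)
    (by simp)
  exact ⟨g, by simpa [sub_eq_zero] using hg⟩

namespace LaurentSeries

instance charP {R : Type*} [Semiring R] (p : ℕ) [CharP R p] : CharP R⸨X⸩ p :=
  charP_of_injective_ringHom HahnSeries.C_injective p

theorem exists_coe_X_pow_mul_eq_of_le_order {R : Type*} [Semiring R] {x : R⸨X⸩} {n : ℕ}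
    (hn : (n : ℤ) ≤ x.order) : ∃ M : R⟦X⟧, ((X ^ n * M : R⟦X⟧) : R⸨X⸩) = x := by
  refine ⟨X ^ (x.order.toNat - n) * x.powerSeriesPart, ?_⟩
  rw [← mul_assoc, ← pow_add, Nat.add_sub_cancel' (by omega)]
  exact X_order_mul_powerSeriesPart (Int.toNat_of_nonneg (by omega))

theorem exists_sq_add_self_eq_of_order_pos {R : Type*} [CommRing R] {x : R⸨X⸩}
    (hx : 0 < x.order) : ∃ g : R⸨X⸩, g ^ 2 + g = x := by
  obtain ⟨M, rfl⟩ := exists_coe_X_pow_mul_eq_of_le_order (x := x) (n := 1) (by omega)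
  obtain ⟨g, hg⟩ := PowerSeries.exists_sq_add_self_eq (M := X ^ 1 * M) (by simp)
  exact ⟨g, by rw [← hg]; push_cast; rfl⟩

theorem mem_span_singleton_of_order_le {F : Type*} [Field F] {x y : F⸨X⸩} (hx : x ≠ 0)
    (hxy : x.order ≤ y.order) : y ∈ Submodule.span F⟦X⟧ {x} := by
  rw [Submodule.mem_span_singleton]
  obtain rfl | hy := eq_or_ne y 0
  · exact ⟨0, zero_smul _ _⟩
  have hquot : (y * x⁻¹).order + x.order = y.order := by
    rw [← HahnSeries.order_mul (mul_ne_zero hy (inv_ne_zero hx)) hx, inv_mul_cancel_right₀ hx]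
  obtain ⟨M, hM⟩ := exists_coe_X_pow_mul_eq_of_le_order (x := y * x⁻¹) (n := 0) (by omega)
  refine ⟨M, ?_⟩
  rw [Algebra.smul_def, coe_algebraMap, ← one_mul M, ← pow_zero X, hM, inv_mul_cancel_right₀ hx]

theorem exists_sq_add_self_add_eq_zero_of_order_pos {R : Type*} [CommRing R] [CharP R 2]
    {a h : R⸨X⸩} (hpos : 0 < (h ^ 2 + h + a).order) : ∃ h' : R⸨X⸩, h' ^ 2 + h' + a = 0 := by
  obtain ⟨g, hg⟩ := exists_sq_add_self_eq_of_order_pos hpos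
  refine ⟨h + g, ?_⟩
  calc (h + g) ^ 2 + (h + g) + a = (h ^ 2 + h + a) + (g ^ 2 + g) := by rw [CharTwo.add_sq]; ring
    _ = 0 := by rw [hg, CharTwo.add_self_eq_zero]

theorem exists_order_sq_add_self_add_max {R : Type*} [CommRing R] [CharP R 2] {a : R⸨X⸩}
    (ha : ∀ h : R⸨X⸩, h ^ 2 + h + a ≠ 0) :
    ∃ h₀ : R⸨X⸩, ∀ h, (h ^ 2 + h + a).order ≤ (h₀ ^ 2 + h₀ + a).order := by
  have hbdd : ∀ h : R⸨X⸩, (h ^ 2 + h + a).order ≤ 0 := fun h ↦ by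
    by_contra! hpos
    obtain ⟨h', hh'⟩ := exists_sq_add_self_add_eq_zero_of_order_pos hpos
    exact ha h' hh'
  obtain ⟨-, ⟨h₀, rfl⟩, hmax⟩ := Int.exists_greatest_of_bdd
    (P := fun n ↦ ∃ h : R⸨X⸩, (h ^ 2 + h + a).order = n)
    ⟨0, fun _ ⟨h, hh⟩ ↦ hh ▸ hbdd h⟩ ⟨_, 0, rfl⟩
  exact ⟨h₀, fun h ↦ hmax _ ⟨h, rfl⟩⟩

end LaurentSeries

theorem ASdefect_attained_general (τ : ℕ) (a : Kk τ) :
    ∃ h : Kk τ, ASdefect τ a = Submodule.span (Ok τ) {h ^ 2 + h + a} := by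
  by_cases! hroot : ∃ h : Kk τ, h ^ 2 + h + a = 0
  · obtain ⟨h, hh⟩ := hroot
    refine ⟨h, le_antisymm (iInf_le _ h) ?_⟩
    rw [hh, Submodule.span_zero_singleton]
    exact bot_le
  · obtain ⟨h₀, hmax⟩ := exists_order_sq_add_self_add_max hroot
    refine ⟨h₀, le_antisymm (iInf_le _ h₀) (le_iInf fun h ↦ ?_)⟩
    rw [Submodule.span_singleton_le_iff_mem]
    exact mem_span_singleton_of_order_le (hroot h) (hmax h)

/-- the infimum defining the Artin–Schreier defect is attained:
for every `a ∈ K` there is `h ∈ K` with `D(a) = (h² + h + a)`. -/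
theorem ASdefect_attained (τ : ℕ) (hτ : 0 < τ) (a : Kk τ) :
    ∃ h : Kk τ, ASdefect τ a = Submodule.span (Ok τ) {h ^ 2 + h + a} :=
  ASdefect_attained_general τ a
end
end

section
/- The image of the Artin–Schreier defect D : K → {fractional ideals of O} ∪ {(0)} is exactly the set S = {(0), O} ∪ {(π^{−2t+1}) : t > 0}. In particular, D(a) is never of the form (π^{−2t}) with t > 0 and never (π^s) with s > 0. -/
noncomputable section

/-- The uniformizer `π` of `K`, viewed as a Laurent series. -/
def pp (τ : ℕ) : Kk τ := algebraMap (Ok τ) (Kk τ) PowerSeries.X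

/-!
Adding an Artin–Schreier value `g² + g` to `a` does not change `D(a)`, and some such translate `b`
of `a` maximises `ν(h² + h + a)`; then `D(a) = (b)`. Elements of positive valuation are
Artin–Schreier values (Hensel's lemma in `F⟦X⟧`), so `b = 0` or `ν(b) ≤ 0`, and an even negative
leading term `c π^{2m}` of `b` is cancelled by `g = √c π^m`, so `ν(b)` is `0` or odd and negative.
Conversely, since `ν(h² + h)` is either `2ν(h) < 0` or nonnegative with constant term of the form
`x² + x`, the elements `π^{-2t+1}`, and the constants outside the image of `x ↦ x² + x` on `F`,
are already maximal in their class.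
-/

namespace PowerSeries

theorem exists_sq_add_self_eq_s4 {R : Type*} [CommRing R] {B : R⟦X⟧} (hB : constantCoeff B = 0) :
    ∃ G : R⟦X⟧, G ^ 2 + G = B := by
  obtain ⟨G, hG, -⟩ := HenselianRing.is_henselian (I := Ideal.span {X})
    (Polynomial.X ^ 2 + Polynomial.X - Polynomial.C B) (by monicity!) 0
    (by simpa [Ideal.mem_span_singleton, X_dvd_iff] using hB) (by simp)
  exact ⟨G, by simpa [sub_eq_zero] using hG⟩

end PowerSeries

theorem CharTwo.add_sq_add_add_eq {R : Type*} [CommRing R] [CharP R 2] (h g a : R) :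
    (h + g) ^ 2 + (h + g) + a = h ^ 2 + h + (g ^ 2 + g + a) := by
  rw [CharTwo.add_sq]
  ring

namespace LaurentSeries

open HahnSeries PowerSeries

section CommRing

variable {R : Type*} [CommRing R]

instance (p : ℕ) [CharP R p] : CharP R⸨X⸩ p :=
  charP_of_injective_ringHom HahnSeries.C_injective p

theorem zero_le_orderTop_iff {x : R⸨X⸩} : 0 ≤ x.orderTop ↔ ∃ F : R⟦X⟧, (F : R⸨X⸩) = x := by
  constructor
  · intro hx
    rcases eq_or_ne x 0 with rfl | hx0
    · exact ⟨0, map_zero _⟩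
    · have : 0 ≤ x.order := by
        rwa [← order_eq_orderTop_of_ne_zero hx0, WithTop.coe_nonneg] at hx
      exact ⟨X ^ x.order.toNat * x.powerSeriesPart, X_order_mul_powerSeriesPart (by omega)⟩
  · rintro ⟨F, rfl⟩
    refine le_orderTop_iff_forall.mpr fun j hj => ?_
    rw [coeff_coe, if_pos (by exact_mod_cast hj)]

theorem exists_sq_add_self_eq_of_orderTop_pos {b : R⸨X⸩} (hb : 0 < b.orderTop) :
    ∃ g : R⸨X⸩, g ^ 2 + g = b := by
  obtain ⟨B, rfl⟩ := zero_le_orderTop_iff.mp hb.le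
  obtain ⟨G, hG⟩ := PowerSeries.exists_sq_add_self_eq_s4 (B := B) (by
    rw [← coeff_zero_eq_constantCoeff_apply, ← coeff_coe_powerSeries]
    exact coeff_eq_zero_of_lt_orderTop hb)
  exact ⟨G, by rw [← hG, coe_add, coe_pow]⟩

theorem orderTop_sq_add_self_of_neg [NoZeroDivisors R] {h : R⸨X⸩} {n : ℤ} (hh : h.orderTop = n)
    (hn : n < 0) : (h ^ 2 + h).orderTop = (2 * n : ℤ) := by
  have hsq : (h ^ 2).orderTop = (2 * n : ℤ) := by
    rw [pow_two, orderTop_mul, hh, two_mul, WithTop.coe_add]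
  rw [orderTop_add_eq_left (by rw [hsq, hh]; exact_mod_cast (by omega)), hsq]

theorem sq_add_self_cases [NoZeroDivisors R] (h : R⸨X⸩) :
    (∃ n < 0, (h ^ 2 + h).orderTop = (2 * n : ℤ)) ∨
      0 ≤ (h ^ 2 + h).orderTop ∧ (h ^ 2 + h).coeff 0 ∈ Set.range fun x : R => x ^ 2 + x := by
  rcases lt_or_ge h.orderTop 0 with hneg | hnn
  · obtain ⟨n, hn⟩ := WithTop.ne_top_iff_exists.mp hneg.ne_top
    have hn0 : n < 0 := by exact_mod_cast hn ▸ hneg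
    exact Or.inl ⟨n, hn0, orderTop_sq_add_self_of_neg hn.symm hn0⟩
  · obtain ⟨H, rfl⟩ := zero_le_orderTop_iff.mp hnn
    rw [← coe_pow, ← coe_add]
    refine Or.inr ⟨zero_le_orderTop_iff.mpr ⟨_, rfl⟩, constantCoeff H, ?_⟩
    rw [← Nat.cast_zero, coeff_coe_powerSeries, coeff_zero_eq_constantCoeff_apply, map_add, map_pow]

end CommRing

section Field

variable {K : Type*} [Field K]

theorem mem_span_singleton_iff_orderTop_le {x y : K⸨X⸩} :
    y ∈ Submodule.span K⟦X⟧ {x} ↔ x.orderTop ≤ y.orderTop := by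
  rw [Submodule.mem_span_singleton]
  constructor
  · rintro ⟨F, rfl⟩
    rw [Algebra.smul_def, coe_algebraMap, orderTop_mul]
    exact le_add_of_nonneg_left (zero_le_orderTop_iff.mpr ⟨F, rfl⟩)
  · intro hxy
    rcases eq_or_ne x 0 with rfl | hx
    · exact ⟨0, by simpa [eq_comm] using hxy⟩
    obtain ⟨F, hF⟩ := (zero_le_orderTop_iff (x := y * x⁻¹)).mp (by
      rwa [← WithTop.add_le_add_iff_right (orderTop_ne_top.mpr hx), zero_add, ← orderTop_mul,
        inv_mul_cancel_right₀ hx])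
    exact ⟨F, by rw [Algebra.smul_def, coe_algebraMap, hF, inv_mul_cancel_right₀ hx]⟩

theorem span_singleton_le_span_singleton_iff {x y : K⸨X⸩} :
    Submodule.span K⟦X⟧ {x} ≤ Submodule.span K⟦X⟧ {y} ↔ y.orderTop ≤ x.orderTop := by
  rw [Submodule.span_singleton_le_iff_mem, mem_span_singleton_iff_orderTop_le]

theorem span_singleton_eq_of_orderTop_eq {x y : K⸨X⸩} (h : x.orderTop = y.orderTop) :
    Submodule.span K⟦X⟧ {x} = Submodule.span K⟦X⟧ {y} :=
  le_antisymm (span_singleton_le_span_singleton_iff.mpr h.ge)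
    (span_singleton_le_span_singleton_iff.mpr h.le)

end Field

section ArtinSchreier

variable {R : Type*} [CommRing R]

def IsASReduced (a : R⸨X⸩) : Prop :=
  ∀ h : R⸨X⸩, (h ^ 2 + h + a).orderTop ≤ a.orderTop

theorem isASReduced_zero : IsASReduced (0 : R⸨X⸩) := fun _ => by
  rw [orderTop_zero]
  exact le_top

variable [CharP R 2]

theorem exists_forall_orderTop_sq_add_self_add_le (a : R⸨X⸩) :
    ∃ g : R⸨X⸩, ∀ h, (h ^ 2 + h + a).orderTop ≤ (g ^ 2 + g + a).orderTop := by
  by_cases hroot : ∃ g : R⸨X⸩, g ^ 2 + g + a = 0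
  · obtain ⟨g, hg⟩ := hroot
    exact ⟨g, fun h => by rw [hg, orderTop_zero]; exact le_top⟩
  push Not at hroot
  have hle : ∀ h : R⸨X⸩, (h ^ 2 + h + a).orderTop ≤ 0 := by
    intro h
    by_contra! hpos
    obtain ⟨k, hk⟩ := exists_sq_add_self_eq_of_orderTop_pos hpos
    exact hroot (k + h) (by rw [CharTwo.add_sq_add_add_eq, hk, CharTwo.add_self_eq_zero])
  have hfin (h : R⸨X⸩) : ∃ n : ℤ, (h ^ 2 + h + a).orderTop = n :=
    WithTop.ne_top_iff_exists.mp (orderTop_ne_top.mpr (hroot h)) |>.imp fun _ => Eq.symm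
  obtain ⟨M, ⟨g, hg⟩, hmax⟩ :=
    Int.exists_greatest_of_bdd (P := fun n => ∃ h : R⸨X⸩, (h ^ 2 + h + a).orderTop = n)
      ⟨0, fun n ⟨h, hn⟩ => by exact_mod_cast hn ▸ hle h⟩ ((hfin 0).imp fun _ hn => ⟨0, hn⟩)
  refine ⟨g, fun h => ?_⟩
  obtain ⟨n, hn⟩ := hfin h
  rw [hn, hg]
  exact_mod_cast hmax n ⟨h, hn⟩

theorem exists_isASReduced_sq_add_self_add (a : R⸨X⸩) :
    ∃ g : R⸨X⸩, IsASReduced (g ^ 2 + g + a) := by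
  obtain ⟨g, hg⟩ := exists_forall_orderTop_sq_add_self_add_le a
  exact ⟨g, fun h => by simpa only [CharTwo.add_sq_add_add_eq] using hg (h + g)⟩

theorem IsASReduced.orderTop_nonpos {a : R⸨X⸩} (ha : IsASReduced a) (ha0 : a ≠ 0) :
    a.orderTop ≤ 0 := by
  by_contra! hpos
  obtain ⟨g, hg⟩ := exists_sq_add_self_eq_of_orderTop_pos hpos
  have := ha g
  rw [hg, CharTwo.add_self_eq_zero, orderTop_zero, top_le_iff, orderTop_eq_top] at this
  exact ha0 this

theorem IsASReduced.orderTop_ne_two_mul [PerfectRing R 2] {a : R⸨X⸩} (ha : IsASReduced a)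
    {n : ℤ} (hn : n < 0) : a.orderTop ≠ (2 * n : ℤ) := by
  intro han
  obtain ⟨r, hr⟩ := surjective_frobenius R 2 a.leadingCoeff
  rw [frobenius_def] at hr
  have hr0 : r ^ 2 ≠ 0 := by
    rw [hr, leadingCoeff_ne_zero, ← orderTop_ne_top, han]
    exact WithTop.coe_ne_top
  have hsq : (single n r ^ 2 : R⸨X⸩) = single (2 * n) (r ^ 2) := by
    rw [single_pow, nsmul_eq_mul, Nat.cast_ofNat]
  have hlt : ((2 * n : ℤ) : WithTop ℤ) < (single n r ^ 2 + single n r + a).orderTop := by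
    rw [show single n r ^ 2 + single n r + a = a - single n r ^ 2 + single n r by
      rw [CharTwo.sub_eq_add]; ring, hsq]
    refine lt_of_lt_of_le (lt_min ?_ (lt_orderTop_single (g := 2 * n) (g' := n) (by omega)))
      min_orderTop_le_orderTop_add
    exact le_orderTop_of_leadingCoeff_eq han (orderTop_single hr0)
      (by rw [leadingCoeff_of_single, hr])
  exact (ha (single n r)).not_gt (han ▸ hlt)

theorem IsASReduced.orderTop_eq_zero_or_odd [PerfectRing R 2] {a : R⸨X⸩} (ha : IsASReduced a)
    (ha0 : a ≠ 0) : a.orderTop = 0 ∨ ∃ t : ℕ, 0 < t ∧ a.orderTop = (-2 * (t : ℤ) + 1 : ℤ) := by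
  obtain ⟨M, hM⟩ := WithTop.ne_top_iff_exists.mp (orderTop_ne_top.mpr ha0)
  have hM0 : M ≤ 0 := by exact_mod_cast hM ▸ ha.orderTop_nonpos ha0
  obtain ⟨k, rfl | rfl⟩ := Int.even_or_odd' M
  · refine Or.inl ?_
    obtain rfl : k = 0 := by
      by_contra hk
      exact ha.orderTop_ne_two_mul (by omega) hM.symm
    rw [← hM, mul_zero, WithTop.coe_zero]
  · exact Or.inr ⟨(-k).toNat, by omega, by rw [← hM]; congr 1; omega⟩

variable [NoZeroDivisors R]

theorem isASReduced_of_orderTop_odd {a : R⸨X⸩} {M : ℤ} (ha : a.orderTop = M) (hM : M < 0)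
    (hodd : Odd M) : IsASReduced a := by
  intro h
  by_contra! hlt
  have hAS : (h ^ 2 + h).orderTop = M := by
    rw [← CharTwo.add_cancel_right (h ^ 2 + h) a, orderTop_add_eq_right hlt, ha]
  rcases sq_add_self_cases h with ⟨n, -, hn⟩ | ⟨hnn, -⟩
  · rw [hAS, WithTop.coe_inj] at hn
    exact Int.not_even_iff_odd.mpr hodd ⟨n, by omega⟩
  · rw [hAS] at hnn
    exact absurd (WithTop.coe_nonneg.mp hnn) (by omega)

theorem isASReduced_of_orderTop_eq_zero {a : R⸨X⸩} (ha : a.orderTop = 0)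
    (hc : a.coeff 0 ∉ Set.range fun x : R => x ^ 2 + x) : IsASReduced a := by
  intro h
  by_contra! hlt
  have hAS : h ^ 2 + h = h ^ 2 + h + a + a := (CharTwo.add_cancel_right _ _).symm
  rcases sq_add_self_cases h with ⟨n, hn0, hn⟩ | ⟨-, hc'⟩
  · rw [hAS, orderTop_add_eq_right hlt, ha, ← WithTop.coe_zero, WithTop.coe_inj] at hn
    omega
  · rw [hAS, coeff_add, coeff_eq_zero_of_lt_orderTop (by rwa [WithTop.coe_zero, ← ha]),
      zero_add] at hc'
    exact hc hc'

end ArtinSchreier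

end LaurentSeries

theorem exists_notMem_range_sq_add_self (R : Type*) [CommRing R] [Nontrivial R] [Finite R]
    [CharP R 2] : ∃ c : R, c ∉ Set.range fun x : R => x ^ 2 + x := by
  by_contra! h
  have hinj := Finite.injective_iff_surjective.mpr (Set.range_eq_univ.mp (Set.eq_univ_of_forall h))
  exact zero_ne_one (hinj (by simp [CharTwo.add_self_eq_zero] : (0 : R) ^ 2 + 0 = 1 ^ 2 + 1))

open LaurentSeries HahnSeries

theorem ASdefect_sq_add_self_add {τ : ℕ} (g a : Kk τ) :
    ASdefect τ (g ^ 2 + g + a) = ASdefect τ a := by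
  simp only [ASdefect, ← CharTwo.add_sq_add_add_eq]
  exact (Equiv.addRight g).iInf_comp (g := fun h => Submodule.span (Ok τ) {h ^ 2 + h + a})

theorem ASdefect_eq_span_of_isASReduced {τ : ℕ} {a : Kk τ} (ha : IsASReduced a) :
    ASdefect τ a = Submodule.span (Ok τ) {a} :=
  le_antisymm (iInf_le_of_le 0 (by rw [zero_pow two_ne_zero, zero_add, zero_add]))
    (le_iInf fun h => span_singleton_le_span_singleton_iff.mpr (ha h))

theorem orderTop_pp_zpow (τ : ℕ) (m : ℤ) : (pp τ ^ m).orderTop = m := by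
  rw [pp, coe_algebraMap, ofPowerSeries_X, ← RatFunc.single_zpow, orderTop_single one_ne_zero]

theorem ASdefect_C_eq_span_one {τ : ℕ} {c : Fq τ} (hc : c ∉ Set.range fun x => x ^ 2 + x) :
    ASdefect τ (C c) = Submodule.span (Ok τ) {1} := by
  have hc0 : c ≠ 0 := fun h => hc ⟨0, by rw [h]; ring⟩
  have hC : (C c : Kk τ).orderTop = 0 := by
    rw [C_apply, orderTop_single hc0, WithTop.coe_zero]
  rw [ASdefect_eq_span_of_isASReduced (isASReduced_of_orderTop_eq_zero hC (by simpa using hc)),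
    span_singleton_eq_of_orderTop_eq (hC.trans orderTop_one.symm)]

theorem ASdefect_range_general (τ : ℕ) :
    Set.range (ASdefect τ) =
      {I : Submodule (Ok τ) (Kk τ) |
        I = ⊥ ∨ I = Submodule.span (Ok τ) {(1 : Kk τ)} ∨
          ∃ t : ℕ, 0 < t ∧ I = Submodule.span (Ok τ) {pp τ ^ (-2 * (t : ℤ) + 1)}} := by
  ext I
  constructor
  · rintro ⟨a, rfl⟩
    obtain ⟨g, hred⟩ := exists_isASReduced_sq_add_self_add a
    rw [← ASdefect_sq_add_self_add g a, ASdefect_eq_span_of_isASReduced hred]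
    rcases eq_or_ne (g ^ 2 + g + a) 0 with h0 | h0
    · exact Or.inl (by rw [h0, Submodule.span_zero_singleton])
    rcases hred.orderTop_eq_zero_or_odd h0 with h | ⟨t, ht, h⟩
    · exact Or.inr (Or.inl (span_singleton_eq_of_orderTop_eq (h.trans orderTop_one.symm)))
    · exact Or.inr (Or.inr ⟨t, ht, span_singleton_eq_of_orderTop_eq (by rw [h, orderTop_pp_zpow])⟩)
  · rintro (rfl | rfl | ⟨t, ht, rfl⟩)
    · exact ⟨0, by rw [ASdefect_eq_span_of_isASReduced isASReduced_zero,
        Submodule.span_zero_singleton]⟩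
    · obtain ⟨c, hc⟩ := exists_notMem_range_sq_add_self (Fq τ)
      exact ⟨C c, ASdefect_C_eq_span_one hc⟩
    · exact ⟨pp τ ^ (-2 * (t : ℤ) + 1), ASdefect_eq_span_of_isASReduced
        (isASReduced_of_orderTop_odd (orderTop_pp_zpow τ _) (by omega) ⟨-t, by ring⟩)⟩

/-- the image of the Artin–Schreier defect is exactly
`S = {(0), O} ∪ {(π^{-2t+1}) : t > 0}`. -/
theorem ASdefect_range (τ : ℕ) (hτ : 0 < τ) :
    Set.range (ASdefect τ) =
      {I : Submodule (Ok τ) (Kk τ) |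
        I = ⊥ ∨ I = Submodule.span (Ok τ) {(1 : Kk τ)} ∨
          ∃ t : ℕ, 0 < t ∧ I = Submodule.span (Ok τ) {pp τ ^ (-2 * (t : ℤ) + 1)}} :=
  ASdefect_range_general τ
end
end

section
/- Let a ∈ K = F_{2^τ}((π)) and let b be an element of an algebraic closure of K with b² + b = a. Then D(a) = (0) if and only if b ∈ K. -/
noncomputable section

/-!
`D(a) = (0)` exactly when `a = h² + h` for some `h ∈ K`: then `h² + h + a = 0` and one of
the principal ideals is zero. Otherwise every `c = h² + h + a` has valuation `≤ 0`, i.e.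
`1 ∈ (c)`: if `c` had positive valuation, the Artin–Schreier polynomial `X² + X - c` would
have the simple root `0` modulo `π`, hence by Hensel's lemma a root `g ∈ πO`, and
`a = (h + g)² + (h + g)`. Finally, in characteristic two the roots of `X² + X - a` are
`b` and `b + 1`, so `a` is of the form `h² + h` exactly when `b ∈ K`.
-/

open Polynomial in
theorem HenselianRing.exists_sq_add_self_eq {R : Type*} [CommRing R] (I : Ideal R)
    [HenselianRing R I] {c : R} (hc : c ∈ I) : ∃ g : R, g ^ 2 + g = c := by
  have hmonic : (X ^ 2 + X - C c : R[X]).Monic := by monicity!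
  obtain ⟨g, hg, -⟩ := HenselianRing.is_henselian (I := I) _ hmonic 0
    (by simpa using I.neg_mem hc) (by simp)
  exact ⟨g, sub_eq_zero.mp (by simpa using hg)⟩

theorem CharTwo.eq_or_eq_add_one_of_sq_add_self_eq {R : Type*} [CommRing R] [NoZeroDivisors R]
    [CharP R 2] {x y : R} (h : x ^ 2 + x = y ^ 2 + y) : x = y ∨ x = y + 1 := by
  have hprod : (x + y) * (x + y + 1) = 0 := by
    linear_combination h + (x * y + y ^ 2 + y) * CharTwo.two_eq_zero (R := R)
  rcases mul_eq_zero.mp hprod with h0 | h1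
  · exact .inl (CharTwo.add_eq_zero.mp h0)
  · exact .inr (CharTwo.add_eq_zero.mp (by rwa [add_assoc] at h1))

theorem RingHom.mem_range_iff_exists_sq_add_self_eq {K L : Type*} [Field K] [CommRing L]
    [IsDomain L] [CharP L 2] (f : K →+* L) {a : K} {b : L} (hb : b ^ 2 + b = f a) :
    b ∈ f.range ↔ ∃ h : K, h ^ 2 + h = a := by
  constructor
  · rintro ⟨h, rfl⟩
    exact ⟨h, f.injective (by simpa using hb)⟩
  · rintro ⟨h, rfl⟩
    rcases CharTwo.eq_or_eq_add_one_of_sq_add_self_eq (x := b) (y := f h) (by simpa using hb)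
      with rfl | rfl
    exacts [⟨h, rfl⟩, ⟨h + 1, by simp⟩]

namespace LaurentSeries

open HahnSeries PowerSeries

instance {R : Type*} [Semiring R] (p : ℕ) [CharP R p] : CharP R⸨X⸩ p :=
  charP_of_injective_ringHom HahnSeries.C_injective p

theorem exists_coe_eq_of_order_pos {R : Type*} [CommSemiring R] {x : R⸨X⸩} (hx : 0 < x.order) :
    ∃ r ∈ Ideal.span {(X : R⟦X⟧)}, (r : R⸨X⸩) = x := by
  obtain ⟨n, hn⟩ := Int.eq_ofNat_of_zero_le hx.le
  refine ⟨X ^ n * x.powerSeriesPart, ?_, X_order_mul_powerSeriesPart hn.symm⟩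
  exact Ideal.mul_mem_right _ _
    (Ideal.pow_mem_of_mem _ (Ideal.mem_span_singleton_self X) n (by omega))

theorem one_mem_span_singleton_of_order_nonpos {F : Type*} [Field F] {x : F⸨X⸩} (hx : x ≠ 0)
    (h : x.order ≤ 0) : (1 : F⸨X⸩) ∈ Submodule.span F⟦X⟧ {x} := by
  obtain ⟨n, hn⟩ := Int.eq_ofNat_of_zero_le (neg_nonneg.mpr h)
  have hunit : constantCoeff x.powerSeriesPart ≠ 0 := by
    simpa [← coeff_zero_eq_constantCoeff_apply, powerSeriesPart_coeff]
      using coeff_order_eq_zero.not.mpr hx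
  refine Submodule.mem_span_singleton.mpr ⟨x.powerSeriesPart⁻¹ * X ^ n, ?_⟩
  rw [Algebra.smul_def, coe_algebraMap, map_mul, mul_assoc, ofPowerSeries_X_pow, ← hn,
    ← ofPowerSeries_powerSeriesPart, ← map_mul, PowerSeries.inv_mul_cancel _ hunit, map_one]

theorem exists_sq_add_self_eq_or_one_mem_span_singleton {F : Type*} [Field F] (c : F⸨X⸩) :
    (∃ g : F⸨X⸩, g ^ 2 + g = c) ∨ (1 : F⸨X⸩) ∈ Submodule.span F⟦X⟧ {c} := by
  rcases eq_or_ne c 0 with rfl | hc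
  · exact .inl ⟨0, by simp⟩
  rcases le_or_gt c.order 0 with hord | hord
  · exact .inr (one_mem_span_singleton_of_order_nonpos hc hord)
  obtain ⟨r, hr, rfl⟩ := exists_coe_eq_of_order_pos hord
  obtain ⟨g, rfl⟩ := HenselianRing.exists_sq_add_self_eq _ hr
  exact .inl ⟨g, by simp⟩

theorem iInf_span_singleton_sq_add_self_add_eq_bot_iff {F : Type*} [Field F] [CharP F 2]
    (a : F⸨X⸩) :
    ⨅ h : F⸨X⸩, Submodule.span F⟦X⟧ {h ^ 2 + h + a} = ⊥ ↔ ∃ h : F⸨X⸩, h ^ 2 + h = a := by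
  constructor
  · intro hbot
    by_contra! hnot
    suffices (1 : F⸨X⸩) ∈ ⨅ h : F⸨X⸩, Submodule.span F⟦X⟧ {h ^ 2 + h + a} by
      simp [hbot] at this
    refine Submodule.mem_iInf _ |>.mpr fun h => ?_
    refine (exists_sq_add_self_eq_or_one_mem_span_singleton _).resolve_left ?_
    rintro ⟨g, hg⟩
    exact hnot (h + g) <| by
      linear_combination hg + (h * g + h ^ 2 + h) * CharTwo.two_eq_zero (R := F⸨X⸩)
  · rintro ⟨h, rfl⟩
    refine eq_bot_iff.mpr (iInf_le_of_le h ?_)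
    simp [CharTwo.add_self_eq_zero]

end LaurentSeries

theorem ASdefect_eq_bot_iff_general (τ : ℕ) (a : Kk τ)
    (b : AlgebraicClosure (Kk τ))
    (hb : b ^ 2 + b = algebraMap (Kk τ) (AlgebraicClosure (Kk τ)) a) :
    ASdefect τ a = ⊥ ↔
      b ∈ (algebraMap (Kk τ) (AlgebraicClosure (Kk τ))).range := by
  rw [ASdefect, LaurentSeries.iInf_span_singleton_sq_add_self_add_eq_bot_iff,
    RingHom.mem_range_iff_exists_sq_add_self_eq _ hb]

/-- for `b` in an algebraic closure of `K` with `b² + b = a`,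
`D(a) = (0)` if and only if `b ∈ K`. -/
theorem ASdefect_eq_bot_iff (τ : ℕ) (hτ : 0 < τ) (a : Kk τ)
    (b : AlgebraicClosure (Kk τ))
    (hb : b ^ 2 + b = algebraMap (Kk τ) (AlgebraicClosure (Kk τ)) a) :
    ASdefect τ a = ⊥ ↔
      b ∈ (algebraMap (Kk τ) (AlgebraicClosure (Kk τ))).range :=
  ASdefect_eq_bot_iff_general τ a b hb
end
end

section
/- In K = F_{2^τ}((π)), the image of the quadratic defect δ(a) = ⋂_{h∈K}(h² + a), restricted to nonsquare elements a, is exactly the set {(π^{2t+1}) : t ∈ ℤ}. Moreover |δ(a)| ≤ |a| for every a ∈ K, and for each a there exists b ∈ K with |δ(a)| = |δ(a + b²)| = |a + b²|. -/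
noncomputable section

/-- The quadratic defect `δ(a) = ⋂_{h ∈ K} (h² + a)`. -/
def Qdefect (τ : ℕ) (a : Kk τ) : Submodule (Ok τ) (Kk τ) :=
  ⨅ h : Kk τ, Submodule.span (Ok τ) {h ^ 2 + a}

/-! In characteristic two every Laurent series over a perfect field splits as `a = b² + o` where
`o` has only odd-degree terms. A square has no odd-degree terms, so the coefficient of
`h² + a = (h + b)² + o` at the odd index `ord o` is that of `o`; hence `ord (h² + a) ≤ ord o` for
every `h`, with equality at `h = b`, and `δ(a) = (o)`. For a nonsquare `a`, `o ≠ 0` and `(o)` is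
`(π ^ ord o)` with `ord o` odd. -/

open HahnSeries
open scoped LaurentSeries PowerSeries

def quadraticDefect (A : Type*) {L : Type*} [CommSemiring A] [CommRing L] [Algebra A L] (a : L) :
    Submodule A L :=
  ⨅ h : L, Submodule.span A {h ^ 2 + a}

section quadraticDefect

variable {A L : Type*} [CommSemiring A] [CommRing L] [Algebra A L]

theorem quadraticDefect_le_span_singleton (a : L) :
    quadraticDefect A a ≤ Submodule.span A {a} :=
  calc quadraticDefect A a ≤ Submodule.span A {(0 : L) ^ 2 + a} := iInf_le _ 0
    _ = Submodule.span A {a} := by rw [zero_pow two_ne_zero, zero_add]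

theorem quadraticDefect_add_sq [CharP L 2] (a b : L) :
    quadraticDefect A (a + b ^ 2) = quadraticDefect A a :=
  (Equiv.addRight b).iInf_congr fun h => by
    rw [Equiv.coe_addRight, CharTwo.add_sq, add_right_comm, add_assoc]

end quadraticDefect

namespace HahnSeries

variable {Γ R : Type*} [AddCommMonoid Γ] [PartialOrder Γ] [IsOrderedCancelAddMonoid Γ]

instance [Semiring R] {p : ℕ} [CharP R p] : CharP (HahnSeries Γ R) p :=
  charP_of_injective_ringHom C_injective p

/-- In characteristic two the off-diagonal terms of `x * x` cancel in pairs. -/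
theorem coeff_mul_self_eq_zero [CommRing R] [CharP R 2] {x : HahnSeries Γ R} {g : Γ}
    (hx : ∀ i, i + i = g → x.coeff i = 0) : (x * x).coeff g = 0 := by
  rw [coeff_mul]
  refine Finset.sum_involution (fun p _ => p.swap) (fun p _ => ?_) (fun p hp hne hswap => ?_)
    (fun p hp => ?_) (fun p _ => p.swap_swap)
  · rw [Prod.fst_swap, Prod.snd_swap, mul_comm, CharTwo.add_self_eq_zero]
  · have hdiag : p.1 = p.2 := (congrArg Prod.fst hswap).symm
    have hsum := (Finset.mem_antidiagonal.1 hp).2.2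
    rw [← hdiag] at hsum
    exact hne (by rw [hx _ hsum, zero_mul])
  · obtain ⟨h1, h2, hsum⟩ := Finset.mem_antidiagonal.1 hp
    exact Finset.mem_antidiagonal.2 ⟨h2, h1, (add_comm _ _).trans hsum⟩

end HahnSeries

namespace LaurentSeries

theorem odd_order_of_coeff_two_mul_eq_zero {R : Type*} [Zero R] {a : R⸨X⸩}
    (ha : ∀ n, a.coeff (2 * n) = 0) (ha0 : a ≠ 0) : Odd a.order :=
  Int.not_even_iff_odd.1 fun ⟨n, hn⟩ => ha0 (coeff_order_eq_zero.1 (by rw [hn, ← two_mul, ha]))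

section CharTwo

variable {R : Type*} [CommRing R] [CharP R 2]

theorem coeff_sq_two_mul_add_one (x : R⸨X⸩) (n : ℤ) : (x ^ 2).coeff (2 * n + 1) = 0 :=
  sq x ▸ coeff_mul_self_eq_zero fun i hi => by omega

theorem coeff_sq_two_mul (x : R⸨X⸩) (n : ℤ) : (x ^ 2).coeff (2 * n) = x.coeff n ^ 2 := by
  -- in characteristic two, `y` is `x` with its `n`-th coefficient removed
  set y := x + single n (x.coeff n)
  have hx : x = y + single n (x.coeff n) := by
    rw [add_assoc, CharTwo.add_self_eq_zero, add_zero]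
  have hy : (y * y).coeff (2 * n) = 0 := coeff_mul_self_eq_zero fun i hi => by
    obtain rfl : i = n := by omega
    rw [coeff_add, coeff_single_same, CharTwo.add_self_eq_zero]
  conv_lhs => rw [hx, CharTwo.add_sq]
  rw [coeff_add, sq y, hy, single_pow, zero_add, two_nsmul, two_mul, coeff_single_same]

end CharTwo

section Field

variable {K : Type*} [Field K]

theorem mem_span_singleton_of_order_le_s10 {x y : K⸨X⸩} (hy : y ≠ 0) (h : y.order ≤ x.order) :
    x ∈ Submodule.span K⟦X⟧ {y} := by
  rcases eq_or_ne x 0 with rfl | hx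
  · exact Submodule.zero_mem _
  set u := x * y⁻¹
  have hu : u * y = x := inv_mul_cancel_right₀ hy x
  have hu0 : u ≠ 0 := mul_ne_zero hx (inv_ne_zero hy)
  have hord : 0 ≤ u.order := by
    have := order_mul hu0 hy
    rw [hu] at this
    omega
  refine Submodule.mem_span_singleton.2 ⟨PowerSeries.X ^ u.order.toNat * u.powerSeriesPart, ?_⟩
  rw [Algebra.smul_def, coe_algebraMap, X_order_mul_powerSeriesPart (Int.toNat_of_nonneg hord), hu]

theorem span_singleton_eq_of_order_eq {x y : K⸨X⸩} (hx : x ≠ 0) (hy : y ≠ 0)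
    (h : x.order = y.order) : Submodule.span K⟦X⟧ {x} = Submodule.span K⟦X⟧ {y} :=
  le_antisymm ((Submodule.span_singleton_le_iff_mem _ _).2 (mem_span_singleton_of_order_le_s10 hy h.ge))
    ((Submodule.span_singleton_le_iff_mem _ _).2 (mem_span_singleton_of_order_le_s10 hx h.le))

variable [CharP K 2]

/-- The coefficient of `h ^ 2 + a` at the odd index `a.order` is that of `a`. -/
theorem mem_span_sq_add_of_coeff_two_mul_eq_zero {a : K⸨X⸩} (ha : ∀ n, a.coeff (2 * n) = 0)
    (h : K⸨X⸩) : a ∈ Submodule.span K⟦X⟧ {h ^ 2 + a} := by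
  rcases eq_or_ne a 0 with rfl | ha0
  · exact Submodule.zero_mem _
  obtain ⟨m, hm⟩ := odd_order_of_coeff_two_mul_eq_zero ha ha0
  have hcoeff : (h ^ 2 + a).coeff a.order ≠ 0 := by
    rw [coeff_add, hm, coeff_sq_two_mul_add_one, zero_add, ← hm]
    exact mt coeff_order_eq_zero.1 ha0
  exact mem_span_singleton_of_order_le_s10 (ne_zero_of_coeff_ne_zero hcoeff)
    (order_le_of_coeff_ne_zero hcoeff)

theorem quadraticDefect_eq_span_singleton_of_coeff_two_mul_eq_zero {a : K⸨X⸩}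
    (ha : ∀ n, a.coeff (2 * n) = 0) : quadraticDefect K⟦X⟧ a = Submodule.span K⟦X⟧ {a} :=
  (quadraticDefect_le_span_singleton a).antisymm <| le_iInf fun h =>
    (Submodule.span_singleton_le_iff_mem _ _).2 (mem_span_sq_add_of_coeff_two_mul_eq_zero ha h)

theorem exists_coeff_two_mul_add_sq_eq_zero [PerfectRing K 2] (a : K⸨X⸩) :
    ∃ b : K⸨X⸩, ∀ n, (a + b ^ 2).coeff (2 * n) = 0 := by
  have hbdd : BddBelow (Function.support fun n => (frobeniusEquiv K 2).symm (a.coeff (2 * n))) := by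
    refine ⟨a.order / 2, fun n hn => ?_⟩
    have : a.order ≤ 2 * n := order_le_of_coeff_ne_zero fun h0 => hn (by simp only [h0, map_zero])
    omega
  refine ⟨ofSuppBddBelow _ hbdd, fun n => ?_⟩
  rw [coeff_add, coeff_sq_two_mul, coeff_ofSuppBddBelow, frobeniusEquiv_symm_pow_p,
    CharTwo.add_self_eq_zero]

theorem exists_quadraticDefect_eq_span_single_odd [PerfectRing K 2] {a : K⸨X⸩}
    (ha : ¬∃ x, a = x ^ 2) :
    ∃ t : ℤ, quadraticDefect K⟦X⟧ a = Submodule.span K⟦X⟧ {single (2 * t + 1) 1} := by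
  obtain ⟨b, hb⟩ := exists_coeff_two_mul_add_sq_eq_zero a
  have hb0 : a + b ^ 2 ≠ 0 := fun h => ha ⟨b, CharTwo.add_eq_zero.1 h⟩
  obtain ⟨t, ht⟩ := odd_order_of_coeff_two_mul_eq_zero hb hb0
  refine ⟨t, ?_⟩
  rw [← quadraticDefect_add_sq a b, quadraticDefect_eq_span_singleton_of_coeff_two_mul_eq_zero hb]
  exact span_singleton_eq_of_order_eq hb0 (single_ne_zero one_ne_zero)
    (by rw [ht, order_single one_ne_zero])

end Field

end LaurentSeries

open LaurentSeries in
theorem Qdefect_spec_general (τ : ℕ) :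
    (∀ a : Kk τ, ¬ (∃ x : Kk τ, a = x ^ 2) →
        ∃ t : ℤ, Qdefect τ a = Submodule.span (Ok τ) {pp τ ^ (2 * t + 1)}) ∧
      (∀ t : ℤ, ∃ a : Kk τ, ¬ (∃ x : Kk τ, a = x ^ 2) ∧
        Qdefect τ a = Submodule.span (Ok τ) {pp τ ^ (2 * t + 1)}) ∧
      (∀ a : Kk τ, Qdefect τ a ≤ Submodule.span (Ok τ) {a}) ∧
      (∀ a : Kk τ, ∃ b : Kk τ, Qdefect τ a = Qdefect τ (a + b ^ 2) ∧
        Qdefect τ a = Submodule.span (Ok τ) {a + b ^ 2}) := by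
  have hQ : Qdefect τ = quadraticDefect (Ok τ) := rfl
  have hpp (z : ℤ) : pp τ ^ z = single z 1 := by
    rw [pp, coe_algebraMap, ofPowerSeries_X, ← RatFunc.single_zpow]
  simp only [hQ, hpp]
  refine ⟨fun a ha => exists_quadraticDefect_eq_span_single_odd ha,
    fun t => ⟨single (2 * t + 1) 1, ?_, ?_⟩, quadraticDefect_le_span_singleton, fun a => ?_⟩
  · rintro ⟨x, hx⟩
    simpa [coeff_sq_two_mul_add_one] using congrArg (coeff · (2 * t + 1)) hx
  · exact quadraticDefect_eq_span_singleton_of_coeff_two_mul_eq_zero fun n =>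
      coeff_single_of_ne (by omega)
  · obtain ⟨b, hb⟩ := exists_coeff_two_mul_add_sq_eq_zero a
    exact ⟨b, (quadraticDefect_add_sq a b).symm, (quadraticDefect_add_sq a b).symm.trans
      (quadraticDefect_eq_span_singleton_of_coeff_two_mul_eq_zero hb)⟩

/-- the image of the quadratic defect on nonsquares is exactly
`{(π^{2t+1}) : t ∈ ℤ}`; moreover `|δ(a)| ≤ |a|`, i.e. `δ(a) ⊆ (a)`, for every `a`,
and there is `b ∈ K` with `|δ(a)| = |δ(a + b²)| = |a + b²|`. -/
theorem Qdefect_spec (τ : ℕ) (hτ : 0 < τ) :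
    (∀ a : Kk τ, ¬ (∃ x : Kk τ, a = x ^ 2) →
        ∃ t : ℤ, Qdefect τ a = Submodule.span (Ok τ) {pp τ ^ (2 * t + 1)}) ∧
      (∀ t : ℤ, ∃ a : Kk τ, ¬ (∃ x : Kk τ, a = x ^ 2) ∧
        Qdefect τ a = Submodule.span (Ok τ) {pp τ ^ (2 * t + 1)}) ∧
      (∀ a : Kk τ, Qdefect τ a ≤ Submodule.span (Ok τ) {a}) ∧
      (∀ a : Kk τ, ∃ b : Kk τ, Qdefect τ a = Qdefect τ (a + b ^ 2) ∧
        Qdefect τ a = Submodule.span (Ok τ) {a + b ^ 2}) :=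
  Qdefect_spec_general τ

end
end

section
/- Let K be a field of characteristic 2, λ ∈ K, and suppose Δ = λ² + a₁a₂λ + a₁²b₂ + a₂²b₁ ≠ 0. If there exist pairs (x,y), (z,w) ∈ K × K* with C(x,y,z,w) := (1/(yw))[y²m₁(x/y) + w²m₂(z/w) + a₁zy + a₂xw] = λ, then the element q = (x−z) + y·q₁ + w·q₂ of the quaternion algebra A(λ, m₁, m₂) satisfies q·q̄ = 0 where q̄ = (x−z) + y(q₁+a₁) + w(q₂+a₂); hence A(λ, m₁, m₂) is not a division algebra and is isomorphic to M₂(K). -/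
noncomputable section

open FreeAlgebra

/-- Relations presenting the algebra `A(λ, m₁, m₂)` with generators `q₁, q₂` and
relations `m₁(q₁) = m₂(q₂) = 0` and `q₁(q₂ + a₂) + q₂(q₁ + a₁) = λ`,
where `mᵢ(X) = X² + aᵢX + bᵢ`. -/
inductive QuatRel (K : Type*) [Field K] (a₁ b₁ a₂ b₂ lam : K) :
    FreeAlgebra K (Fin 2) → FreeAlgebra K (Fin 2) → Prop
  | m₁ : QuatRel K a₁ b₁ a₂ b₂ lam
      (ι K 0 ^ 2 + algebraMap K _ a₁ * ι K 0 + algebraMap K _ b₁) 0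
  | m₂ : QuatRel K a₁ b₁ a₂ b₂ lam
      (ι K 1 ^ 2 + algebraMap K _ a₂ * ι K 1 + algebraMap K _ b₂) 0
  | sym : QuatRel K a₁ b₁ a₂ b₂ lam
      (ι K 0 * (ι K 1 + algebraMap K _ a₂) + ι K 1 * (ι K 0 + algebraMap K _ a₁))
      (algebraMap K _ lam)

/-- The algebra `A(λ, m₁, m₂)` presented by generators and relations. -/
abbrev QuatAlg (K : Type*) [Field K] (a₁ b₁ a₂ b₂ lam : K) :=
  RingQuot (QuatRel K a₁ b₁ a₂ b₂ lam)

/-- The generator `qᵢ` of `A(λ, m₁, m₂)`. -/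
def quatGen (K : Type*) [Field K] (a₁ b₁ a₂ b₂ lam : K) (i : Fin 2) :
    QuatAlg K a₁ b₁ a₂ b₂ lam :=
  RingQuot.mkAlgHom K (QuatRel K a₁ b₁ a₂ b₂ lam) (ι K i)


set_option linter.unusedSectionVars false
section Aside
variable {K : Type*} [Field K] [CharP K 2] (a₁ b₁ a₂ b₂ lam : K)

local notation "A" => QuatAlg K a₁ b₁ a₂ b₂ lam
local notation "aK" => algebraMap K (QuatAlg K a₁ b₁ a₂ b₂ lam)
local notation "e₁" => quatGen K a₁ b₁ a₂ b₂ lam 0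
local notation "e₂" => quatGen K a₁ b₁ a₂ b₂ lam 1

theorem quat_self (u : A) : u + u = 0 := by
  have h2 : (2 : K) = 0 := by exact_mod_cast CharP.cast_eq_zero K 2
  rw [← two_smul K u, h2, zero_smul]

theorem quat_eq_of_add_eq_zero {u v : A} (h : u + v = 0) : u = v := by
  have := quat_self a₁ b₁ a₂ b₂ lam v
  linear_combination (norm := abel) h - this

theorem quat_rel1 : e₁ * e₁ = aK a₁ * e₁ + aK b₁ := by
  apply quat_eq_of_add_eq_zero
  have h := RingQuot.mkAlgHom_rel K (QuatRel.m₁ (K := K) (a₁ := a₁) (b₁ := b₁)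
    (a₂ := a₂) (b₂ := b₂) (lam := lam))
  simp only [map_add, map_mul, map_pow, AlgHom.commutes, map_zero] at h
  simpa only [quatGen, sq, ← add_assoc] using h

theorem quat_rel2 : e₂ * e₂ = aK a₂ * e₂ + aK b₂ := by
  apply quat_eq_of_add_eq_zero
  have h := RingQuot.mkAlgHom_rel K (QuatRel.m₂ (K := K) (a₁ := a₁) (b₁ := b₁)
    (a₂ := a₂) (b₂ := b₂) (lam := lam))
  simp only [map_add, map_mul, map_pow, AlgHom.commutes, map_zero] at h
  simpa only [quatGen, sq, ← add_assoc] using h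

theorem quat_rel3 : e₂ * e₁ = aK lam + (aK a₂ * e₁ + (aK a₁ * e₂ + e₁ * e₂)) := by
  apply quat_eq_of_add_eq_zero
  have h := RingQuot.mkAlgHom_rel K (QuatRel.sym (K := K) (a₁ := a₁) (b₁ := b₁)
    (a₂ := a₂) (b₂ := b₂) (lam := lam))
  simp only [map_add, map_mul, AlgHom.commutes] at h
  rw [show (RingQuot.mkAlgHom K (QuatRel K a₁ b₁ a₂ b₂ lam)) (ι K 0) = e₁ from rfl,
    show (RingQuot.mkAlgHom K (QuatRel K a₁ b₁ a₂ b₂ lam)) (ι K 1) = e₂ from rfl,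
    mul_add, mul_add, ← Algebra.commutes a₂ e₁, ← Algebra.commutes a₁ e₂] at h
  have h2 := quat_self a₁ b₁ a₂ b₂ lam (aK lam)
  linear_combination (norm := abel) h + h2

theorem quat_span_top (u : A) :
    u ∈ Submodule.span K ({1, e₁, e₂, e₁ * e₂} : Set A) := by
  set V : Submodule K A := Submodule.span K ({1, e₁, e₂, e₁ * e₂} : Set A) with hV
  have m1 : (1 : A) ∈ V := Submodule.subset_span (by simp)
  have me₁ : e₁ ∈ V := Submodule.subset_span (by simp)
  have me₂ : e₂ ∈ V := Submodule.subset_span (by simp)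
  have mk12 : e₁ * e₂ ∈ V := Submodule.subset_span (by simp)
  have hsmul : ∀ (c : K) (v : A), v ∈ V → aK c * v ∈ V := by
    intro c v hv
    rw [← Algebra.smul_def]
    exact V.smul_mem c hv
  -- multiplication by generators preserves V
  have hmul1 : ∀ v ∈ V, e₁ * v ∈ V := by
    intro v hv
    induction hv using Submodule.span_induction with
    | mem w hw =>
      rcases hw with rfl | rfl | rfl | rfl
      · simpa using me₁
      · rw [quat_rel1]
        exact V.add_mem (hsmul _ _ me₁) (by simpa using hsmul b₁ 1 m1)
      · exact mk12
      · rw [← mul_assoc, quat_rel1, add_mul, mul_assoc]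
        exact V.add_mem (hsmul _ _ mk12) (hsmul _ _ me₂)
    | zero => simpa using V.zero_mem
    | add w₁ w₂ _ _ h₁ h₂ => rw [mul_add]; exact V.add_mem h₁ h₂
    | smul c w _ h => rw [mul_smul_comm]; exact V.smul_mem c h
  have hmul2 : ∀ v ∈ V, e₂ * v ∈ V := by
    intro v hv
    induction hv using Submodule.span_induction with
    | mem w hw =>
      rcases hw with rfl | rfl | rfl | rfl
      · simpa using me₂
      · rw [quat_rel3]
        refine V.add_mem (by simpa using hsmul lam 1 m1) (V.add_mem (hsmul _ _ me₁)
          (V.add_mem (hsmul _ _ me₂) mk12))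
      · rw [quat_rel2]
        exact V.add_mem (hsmul _ _ me₂) (by simpa using hsmul b₂ 1 m1)
      · -- e₂ * (e₁ * e₂)
        rw [← mul_assoc, quat_rel3, add_mul, add_mul, add_mul, mul_assoc, mul_assoc,
          mul_assoc, quat_rel2, mul_add, mul_add, ← mul_assoc e₁ (aK a₂) e₂,
          ← Algebra.commutes a₂ e₁, mul_assoc (aK a₂) e₁ e₂, ← Algebra.commutes b₂ e₁,
          ← map_mul]
        repeat' apply V.add_mem
        all_goals
          first

            | exact hsmul _ _ me₁
            | exact hsmul _ _ me₂
            | exact hsmul _ _ mk12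
            | exact hsmul _ _ (hsmul _ _ me₂)
            | simpa using hsmul (a₁ * b₂) 1 m1
    | zero => simpa using V.zero_mem
    | add w₁ w₂ _ _ h₁ h₂ => rw [mul_add]; exact V.add_mem h₁ h₂
    | smul c w _ h => rw [mul_smul_comm]; exact V.smul_mem c h
  -- now general closure
  have key : ∀ v ∈ V, u * v ∈ V := by
    obtain ⟨fa, rfl⟩ := RingQuot.mkAlgHom_surjective K (QuatRel K a₁ b₁ a₂ b₂ lam) u
    induction fa with
    | grade0 c =>
      intro v hv
      rw [AlgHom.commutes]
      exact hsmul c v hv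
    | grade1 i =>
      intro v hv
      fin_cases i
      · exact hmul1 v hv
      · exact hmul2 v hv
    | mul f g hf hg =>
      intro v hv
      rw [map_mul, mul_assoc]
      exact hf _ (hg _ hv)
    | add f g hf hg =>
      intro v hv
      rw [map_add, add_mul]
      exact V.add_mem (hf _ hv) (hg _ hv)
  simpa using key 1 m1

end Aside


section Mside
variable {K : Type*} [Field K] [CharP K 2] (a₁ b₁ a₂ b₂ lam p r : K)

local notation "aM" => algebraMap K (Matrix (Fin 2) (Fin 2) K)

def qM1 : Matrix (Fin 2) (Fin 2) K := !![0, b₁; 1, a₁]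

def qM2 : Matrix (Fin 2) (Fin 2) K := !![p, lam + a₁*p + b₁*r; r, p + a₂]


theorem qM1_rel : (qM1 (K := K) a₁ b₁)^2 + aM a₁ * qM1 a₁ b₁ + aM b₁ = 0 := by
  have h2 : (2:K) = 0 := by exact_mod_cast CharP.cast_eq_zero K 2
  ext i j
  fin_cases i <;> fin_cases j <;>
    simp [qM1, qM2, sq, Matrix.mul_apply, Fin.sum_univ_two, Matrix.algebraMap_matrix_apply,
      Matrix.one_apply, Matrix.add_apply, Matrix.smul_apply, Matrix.vecMul, Matrix.vecHead,
      Matrix.vecTail, dotProduct, Matrix.cons_val_zero, Matrix.cons_val_one, Matrix.head_cons]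
  · linear_combination b₁ * h2
  · linear_combination (a₁*b₁) * h2
  · linear_combination a₁ * h2
  · linear_combination (b₁ + a₁^2) * h2

theorem qM2_rel (hf : p^2 + a₂*p + b₂ + lam*r + a₁*p*r + b₁*r^2 = 0) :
    (qM2 (K := K) a₁ b₁ a₂ lam p r)^2 + aM a₂ * qM2 a₁ b₁ a₂ lam p r + aM b₂ = 0 := by
  have h2 : (2:K) = 0 := by exact_mod_cast CharP.cast_eq_zero K 2
  ext i j
  fin_cases i <;> fin_cases j <;>
    simp [qM1, qM2, sq, Matrix.mul_apply, Fin.sum_univ_two, Matrix.algebraMap_matrix_apply,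
      Matrix.one_apply, Matrix.add_apply, Matrix.smul_apply, Matrix.vecMul, Matrix.vecHead,
      Matrix.vecTail, dotProduct, Matrix.cons_val_zero, Matrix.cons_val_one, Matrix.head_cons]
  · linear_combination hf
  · linear_combination ((lam + a₁*p + b₁*r) * (p + a₂)) * h2
  · linear_combination (r * (p + a₂)) * h2
  · linear_combination hf + (a₂*p + a₂^2) * h2

theorem qM_sym : qM1 (K := K) a₁ b₁ * (qM2 a₁ b₁ a₂ lam p r + aM a₂)
    + qM2 a₁ b₁ a₂ lam p r * (qM1 a₁ b₁ + aM a₁) = aM lam := by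
  have h2 : (2:K) = 0 := by exact_mod_cast CharP.cast_eq_zero K 2
  ext i j
  fin_cases i <;> fin_cases j <;>
    simp [qM1, qM2, sq, Matrix.mul_apply, Fin.sum_univ_two, Matrix.algebraMap_matrix_apply,
      Matrix.one_apply, Matrix.add_apply, Matrix.smul_apply, Matrix.vecMul, Matrix.vecHead,
      Matrix.vecTail, dotProduct, Matrix.cons_val_zero, Matrix.cons_val_one, Matrix.head_cons]
  · linear_combination (b₁*r + a₁*p) * h2
  · linear_combination (b₁*p + b₁*a₂ + a₁*(lam + a₁*p + b₁*r)) * h2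
  · linear_combination (p + a₂ + a₁*r) * h2
  · linear_combination (2*a₁*p + b₁*r + 2*a₁*a₂) * h2

theorem qM_solve (hf : p^2 + a₂*p + b₂ + lam*r + a₁*p*r + b₁*r^2 = 0)
    (m : Matrix (Fin 2) (Fin 2) K) :
    (lam ^ 2 + a₁ * a₂ * lam + a₁ ^ 2 * b₂ + a₂ ^ 2 * b₁) • m =
      (((-1)*lam^2 + (-1)*b₁*lam*r + b₁*a₂*p + b₁*a₂^2 + (-2)*a₁*lam*p + (-1)*a₁*a₂*lam + (-2)*a₁*b₁*p*r + (-2)*a₁*b₁*a₂*r + (-1)*a₁^2*p^2 + a₁^2*lam*r + (-1)*a₁^2*a₂*p + a₁^2*b₁*r^2 + a₁^3*p*r) * m 0 0 + (lam*p + (-1)*b₁*a₂*r + a₁*p^2 + a₁*a₂*p + a₁*b₁*r^2 + (-1)*a₁^2*p*r) * m 0 1 + ((-1)*b₁*lam*p + b₁^2*a₂*r + (-1)*a₁*b₁*p^2 + (-1)*a₁*b₁*lam*r + (-1)*a₁*b₁^2*r^2 + (-1)*a₁^2*b₁*p*r) * m 1 0 + (b₁*lam*r + (-1)*b₁*a₂*p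 + (2)*a₁*b₁*p*r) * m 1 1) • (1 : Matrix (Fin 2) (Fin 2) K)
      + (((-1)*lam*p + b₁*a₂*r + (-1)*a₁*p^2 + (-1)*a₁*lam*r + (-1)*a₁*b₁*r^2 + (-1)*a₁^2*p*r) * m 0 0 + (lam*r + (-1)*a₂*p + (2)*a₁*p*r) * m 0 1 + ((-1)*lam^2 + (-1)*b₁*lam*r + b₁*a₂*p + b₁*a₂^2 + (-3)*a₁*lam*p + (-1)*a₁*a₂*lam + (-2)*a₁*b₁*p*r + (-1)*a₁*b₁*a₂*r + (-2)*a₁^2*p^2 + (-1)*a₁^2*a₂*p) * m 1 0 + (lam*p + (-1)*b₁*a₂*r + a₁*p^2 + a₁*lam*r + a₁*b₁*r^2 + a₁^2*p*r) * m 1 1) • qM1 a₁ b₁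
      + (((-1)*b₁*a₂ + a₁*b₁*r) * m 0 0 + ((-1)*lam + (-1)*a₁*p + (-1)*a₁*a₂ + a₁^2*r) * m 0 1 + (b₁*lam + a₁*b₁*p) * m 1 0 + (b₁*a₂ + (-1)*a₁*b₁*r) * m 1 1) • qM2 a₁ b₁ a₂ lam p r
      + ((lam + a₁*p) * m 0 0 + (a₂ + (-1)*a₁*r) * m 0 1 + ((-1)*b₁*a₂ + a₁*lam + a₁*b₁*r + a₁^2*p) * m 1 0 + ((-1)*lam + (-1)*a₁*p) * m 1 1) • (qM1 a₁ b₁ * qM2 a₁ b₁ a₂ lam p r) := by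
  have h2 : (2:K) = 0 := by exact_mod_cast CharP.cast_eq_zero K 2
  ext i j
  fin_cases i <;> fin_cases j <;>
    simp [qM1, qM2, sq, Matrix.mul_apply, Fin.sum_univ_two, Matrix.algebraMap_matrix_apply,
      Matrix.one_apply, Matrix.add_apply, Matrix.smul_apply, Matrix.vecMul, Matrix.vecHead,
      Matrix.vecTail, dotProduct, Matrix.cons_val_zero, Matrix.cons_val_one, Matrix.head_cons]
  · linear_combination (a₁^2 * (m 0 0)) * hf + ((lam^2 + a₁*lam*p + a₁*a₂*lam + a₁*b₁*a₂*r + (-1)*a₁^2*lam*r + (-1)*a₁^2*b₁*r^2 + (-1)*a₁^3*p*r) * m 0 0) * h2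
  · linear_combination (a₁^2 * (m 0 1)) * hf + ((lam^2 + a₁*lam*p + a₁*a₂*lam + a₁*b₁*a₂*r + (-1)*a₁^2*lam*r + (-1)*a₁^2*b₁*r^2 + (-1)*a₁^3*p*r) * m 0 1) * h2
  · linear_combination (a₁^2 * (m 1 0)) * hf + ((lam^2 + a₁*lam*p + a₁*a₂*lam + a₁*b₁*a₂*r + (-1)*a₁^2*lam*r + (-1)*a₁^2*b₁*r^2 + (-1)*a₁^3*p*r) * m 1 0) * h2
  · linear_combination (a₁^2 * (m 1 1)) * hf + ((lam^2 + a₁*lam*p + a₁*a₂*lam + a₁*b₁*a₂*r + (-1)*a₁^2*lam*r + (-1)*a₁^2*b₁*r^2 + (-1)*a₁^3*p*r) * m 1 1) * h2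


theorem qM_solve' (hf : p^2 + a₂*p + b₂ + lam*r + a₁*p*r + b₁*r^2 = 0)
    (m : Matrix (Fin 2) (Fin 2) K) :
    ∃ c₀ c₁ c₂ c₃ : K,
      (lam ^ 2 + a₁ * a₂ * lam + a₁ ^ 2 * b₂ + a₂ ^ 2 * b₁) • m =
        c₀ • (1 : Matrix (Fin 2) (Fin 2) K) + c₁ • qM1 a₁ b₁
        + c₂ • qM2 a₁ b₁ a₂ lam p r + c₃ • (qM1 a₁ b₁ * qM2 a₁ b₁ a₂ lam p r) :=
  ⟨_, _, _, _, qM_solve a₁ b₁ a₂ b₂ lam p r hf m⟩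

end Mside

open Module

/-- over a field `K` of characteristic 2 with
`Δ = λ² + a₁a₂λ + a₁²b₂ + a₂²b₁ ≠ 0`, if `(x,y), (z,w) ∈ K × K*` satisfy
`C(x,y,z,w) = (1/(yw))[y²m₁(x/y) + w²m₂(z/w) + a₁zy + a₂xw] = λ`, then the
nonzero element `q = (x − z) + y·q₁ + w·q₂` of `A(λ, m₁, m₂)` satisfies
`q·q̄ = 0` for `q̄ = (x − z) + y(q₁ + a₁) + w(q₂ + a₂)`; hence `A(λ, m₁, m₂)`
is not a division algebra and is isomorphic to `M₂(K)`. -/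
theorem quatAlg_split_of_represented (K : Type*) [Field K] [CharP K 2]
    (a₁ b₁ a₂ b₂ lam : K)
    (hΔ : lam ^ 2 + a₁ * a₂ * lam + a₁ ^ 2 * b₂ + a₂ ^ 2 * b₁ ≠ 0)
    (x y z w : K) (hy : y ≠ 0) (hw : w ≠ 0)
    (hC : (y * w)⁻¹ *
        (y ^ 2 * ((x / y) ^ 2 + a₁ * (x / y) + b₁) +
          w ^ 2 * ((z / w) ^ 2 + a₂ * (z / w) + b₂) + a₁ * z * y + a₂ * x * w) = lam) :
    letI A := QuatAlg K a₁ b₁ a₂ b₂ lam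
    letI q₁ := quatGen K a₁ b₁ a₂ b₂ lam 0
    letI q₂ := quatGen K a₁ b₁ a₂ b₂ lam 1
    letI q := algebraMap K A (x - z) + y • q₁ + w • q₂
    letI qbar := algebraMap K A (x - z) + y • (q₁ + algebraMap K A a₁)
      + w • (q₂ + algebraMap K A a₂)
    q ≠ 0 ∧ q * qbar = 0 ∧ ¬ (∀ u : A, u ≠ 0 → IsUnit u) ∧
      Nonempty (A ≃ₐ[K] Matrix (Fin 2) (Fin 2) K) := by
  have h2 : (2:K) = 0 := by exact_mod_cast CharP.cast_eq_zero K 2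
  have hyw : y * w ≠ 0 := mul_ne_zero hy hw
  have hE := congrArg (HMul.hMul (y*w)) hC
  rw [← mul_assoc, mul_inv_cancel₀ hyw, one_mul] at hE
  have e1 : y^2 * ((x/y)^2 + a₁*(x/y) + b₁) = x^2 + a₁*x*y + b₁*y^2 := by
    field_simp
  have e2 : w^2 * ((z/w)^2 + a₂*(z/w) + b₂) = z^2 + a₂*z*w + b₂*w^2 := by
    field_simp
  rw [e1, e2] at hE
  have hC' : x^2 + a₁*x*y + b₁*y^2 + (z^2 + a₂*z*w + b₂*w^2) + a₁*z*y + a₂*x*w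
      = lam*(y*w) := by linear_combination hE
  set pp := (x+z)/w with hpp
  set rr := y/w with hrr
  have hwp : w * pp = x + z := by rw [hpp]; field_simp
  have hwr : w * rr = y := by rw [hrr]; field_simp
  have hf : pp^2 + a₂*pp + b₂ + lam*rr + a₁*pp*rr + b₁*rr^2 = 0 := by
    have hww : (w:K)^2 ≠ 0 := pow_ne_zero 2 hw
    apply mul_left_cancel₀ hww
    rw [mul_zero]
    linear_combination (z + x + pp*w + a₂*w + a₁*rr*w) * hwp
      + (lam*w + b₁*y + b₁*rr*w + a₁*z + a₁*x) * hwr + hC' + (x*z + lam*y*w) * h2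
  set M1 : Matrix (Fin 2) (Fin 2) K := qM1 a₁ b₁ with hM1
  set M2 : Matrix (Fin 2) (Fin 2) K := qM2 a₁ b₁ a₂ lam pp rr with hM2
  set F : FreeAlgebra K (Fin 2) →ₐ[K] Matrix (Fin 2) (Fin 2) K
    := FreeAlgebra.lift K ![M1, M2] with hFdef
  have hF0 : F (FreeAlgebra.ι K 0) = M1 := by simp [hFdef]
  have hF1 : F (FreeAlgebra.ι K 1) = M2 := by simp [hFdef]
  have hrel : ∀ ⦃u v : FreeAlgebra K (Fin 2)⦄, QuatRel K a₁ b₁ a₂ b₂ lam u v → F u = F v := by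
    intro u v hq
    cases hq with
    | m₁ =>
      simp only [map_add, map_mul, map_pow, AlgHom.commutes, hF0, map_zero]
      exact qM1_rel a₁ b₁
    | m₂ =>
      simp only [map_add, map_mul, map_pow, AlgHom.commutes, hF0, hF1, map_zero]
      exact qM2_rel a₁ b₁ a₂ b₂ lam pp rr hf
    | sym =>
      simp only [map_add, map_mul, AlgHom.commutes, hF0, hF1]
      exact qM_sym a₁ b₁ a₂ lam pp rr
  set φ : QuatAlg K a₁ b₁ a₂ b₂ lam →ₐ[K] Matrix (Fin 2) (Fin 2) K
    := RingQuot.liftAlgHom K ⟨F, hrel⟩ with hφdef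
  have hφ0 : φ (quatGen K a₁ b₁ a₂ b₂ lam 0) = M1 := by
    rw [hφdef, quatGen, RingQuot.liftAlgHom_mkAlgHom_apply]
    exact hF0
  have hφ1 : φ (quatGen K a₁ b₁ a₂ b₂ lam 1) = M2 := by
    rw [hφdef, quatGen, RingQuot.liftAlgHom_mkAlgHom_apply]
    exact hF1
  have hsurj : Function.Surjective φ := by
    intro m
    obtain ⟨c₀, c₁, c₂, c₃, hs⟩ := qM_solve' a₁ b₁ a₂ b₂ lam pp rr hf m
    refine ⟨(lam ^ 2 + a₁ * a₂ * lam + a₁ ^ 2 * b₂ + a₂ ^ 2 * b₁)⁻¹ •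
      (c₀ • 1 + c₁ • quatGen K a₁ b₁ a₂ b₂ lam 0 + c₂ • quatGen K a₁ b₁ a₂ b₂ lam 1
        + c₃ • (quatGen K a₁ b₁ a₂ b₂ lam 0 * quatGen K a₁ b₁ a₂ b₂ lam 1)), ?_⟩
    rw [map_smul, map_add, map_add, map_add, map_smul, map_smul, map_smul, map_smul,
      map_one, map_mul, hφ0, hφ1, ← hs, inv_smul_smul₀ hΔ]
  have hVtop : Submodule.span K ({1, quatGen K a₁ b₁ a₂ b₂ lam 0, quatGen K a₁ b₁ a₂ b₂ lam 1,
      quatGen K a₁ b₁ a₂ b₂ lam 0 * quatGen K a₁ b₁ a₂ b₂ lam 1} :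
        Set (QuatAlg K a₁ b₁ a₂ b₂ lam)) = ⊤ :=
    eq_top_iff.2 fun u _ => quat_span_top a₁ b₁ a₂ b₂ lam u
  haveI : Module.Finite K (QuatAlg K a₁ b₁ a₂ b₂ lam) :=
    Module.finite_def.mpr (by rw [← hVtop]; exact Submodule.fg_span (Set.toFinite _))
  haveI := Classical.decEq (QuatAlg K a₁ b₁ a₂ b₂ lam)
  have hrank : finrank K (QuatAlg K a₁ b₁ a₂ b₂ lam) ≤ 4 := by
    rw [← finrank_top, ← hVtop]
    refine le_trans (finrank_span_le_card _) ?_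
    rw [Set.toFinset_insert, Set.toFinset_insert, Set.toFinset_insert, Set.toFinset_singleton]
    refine le_trans (Finset.card_insert_le _ _) ?_
    refine le_trans (Nat.succ_le_succ (Finset.card_insert_le _ _)) ?_
    refine le_trans (Nat.succ_le_succ (Nat.succ_le_succ (Finset.card_insert_le _ _))) ?_
    simp
  have hinj : Function.Injective φ := by
    have hrn := LinearMap.finrank_range_add_finrank_ker φ.toLinearMap
    have hrange : LinearMap.range φ.toLinearMap = ⊤ := LinearMap.range_eq_top.mpr hsurj
    rw [hrange] at hrn
    have h4 : finrank K (⊤ : Submodule K (Matrix (Fin 2) (Fin 2) K)) = 4 := by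
      rw [finrank_top]
      simp [finrank_matrix]
    rw [h4] at hrn
    have hker0 : finrank K ↥(LinearMap.ker φ.toLinearMap) = 0 := by omega
    have hker : LinearMap.ker φ.toLinearMap = ⊥ := Submodule.finrank_eq_zero.mp hker0
    exact LinearMap.ker_eq_bot.mp hker
  have hφq : φ (algebraMap K (QuatAlg K a₁ b₁ a₂ b₂ lam) (x - z)
        + y • quatGen K a₁ b₁ a₂ b₂ lam 0 + w • quatGen K a₁ b₁ a₂ b₂ lam 1)
      = algebraMap K (Matrix (Fin 2) (Fin 2) K) (x - z) + y • M1 + w • M2 := by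
    simp only [map_add, map_smul, AlgHom.commutes, hφ0, hφ1]
  have hφqbar : φ (algebraMap K (QuatAlg K a₁ b₁ a₂ b₂ lam) (x - z)
        + y • (quatGen K a₁ b₁ a₂ b₂ lam 0 + algebraMap K (QuatAlg K a₁ b₁ a₂ b₂ lam) a₁)
        + w • (quatGen K a₁ b₁ a₂ b₂ lam 1 + algebraMap K (QuatAlg K a₁ b₁ a₂ b₂ lam) a₂))
      = algebraMap K (Matrix (Fin 2) (Fin 2) K) (x - z)
        + y • (M1 + algebraMap K (Matrix (Fin 2) (Fin 2) K) a₁)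
        + w • (M2 + algebraMap K (Matrix (Fin 2) (Fin 2) K) a₂) := by
    simp only [map_add, map_smul, AlgHom.commutes, hφ0, hφ1]
  have hqne : algebraMap K (QuatAlg K a₁ b₁ a₂ b₂ lam) (x - z)
      + y • quatGen K a₁ b₁ a₂ b₂ lam 0 + w • quatGen K a₁ b₁ a₂ b₂ lam 1 ≠ 0 := by
    intro h0
    have h0' : algebraMap K (Matrix (Fin 2) (Fin 2) K) (x - z) + y • M1 + w • M2 = 0 := by
      rw [← hφq, h0, map_zero]
    have h01 := congrFun (congrFun h0' 0) 1
    have h11 := congrFun (congrFun h0' 1) 1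
    simp [hM1, hM2, qM1, qM2, Matrix.add_apply, Matrix.smul_apply,
      Matrix.algebraMap_matrix_apply] at h01 h11
    have hu : lam + a₁*pp = 0 := by
      rcases mul_eq_zero.mp (show w * (lam + a₁*pp) = 0 from by
        linear_combination h01 + (-b₁)*hwr + (-b₁*y)*h2) with h|h
      · exact absurd h hw
      · exact h
    have hv : a₁*rr + a₂ = 0 := by
      rcases mul_eq_zero.mp (show w * (a₁*rr + a₂) = 0 from by
        linear_combination h11 + a₁*hwr - hwp + (-x)*h2) with h|h
      · exact absurd h hw
      · exact h
    exact hΔ (by linear_combination a₁^2*hf + (lam + (-1)*a₁*pp + a₁*a₂ + (-1)*a₁^2*rr)*hu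
      + (b₁*a₂ + (-1)*a₁*b₁*rr + (-2)*a₁^2*pp)*hv + (a₁^3*pp*rr)*h2)
  have hqbarne : algebraMap K (QuatAlg K a₁ b₁ a₂ b₂ lam) (x - z)
      + y • (quatGen K a₁ b₁ a₂ b₂ lam 0 + algebraMap K (QuatAlg K a₁ b₁ a₂ b₂ lam) a₁)
      + w • (quatGen K a₁ b₁ a₂ b₂ lam 1 + algebraMap K (QuatAlg K a₁ b₁ a₂ b₂ lam) a₂)
      ≠ 0 := by
    intro h0
    have h0' : algebraMap K (Matrix (Fin 2) (Fin 2) K) (x - z)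
        + y • (M1 + algebraMap K (Matrix (Fin 2) (Fin 2) K) a₁)
        + w • (M2 + algebraMap K (Matrix (Fin 2) (Fin 2) K) a₂) = 0 := by
      rw [← hφqbar, h0, map_zero]
    have h01 := congrFun (congrFun h0' 0) 1
    have h00 := congrFun (congrFun h0' 0) 0
    simp [hM1, hM2, qM1, qM2, Matrix.add_apply, Matrix.smul_apply,
      Matrix.algebraMap_matrix_apply] at h01 h00
    have hu : lam + a₁*pp = 0 := by
      rcases mul_eq_zero.mp (show w * (lam + a₁*pp) = 0 from by
        linear_combination h01 + (-b₁)*hwr + (-b₁*y)*h2) with h|h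
      · exact absurd h hw
      · exact h
    have hv : a₁*rr + a₂ = 0 := by
      rcases mul_eq_zero.mp (show w * (a₁*rr + a₂) = 0 from by
        linear_combination h00 + a₁*hwr - hwp + (-x)*h2) with h|h
      · exact absurd h hw
      · exact h
    exact hΔ (by linear_combination a₁^2*hf + (lam + (-1)*a₁*pp + a₁*a₂ + (-1)*a₁^2*rr)*hu
      + (b₁*a₂ + (-1)*a₁*b₁*rr + (-2)*a₁^2*pp)*hv + (a₁^3*pp*rr)*h2)
  have hmul : (algebraMap K (QuatAlg K a₁ b₁ a₂ b₂ lam) (x - z)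
        + y • quatGen K a₁ b₁ a₂ b₂ lam 0 + w • quatGen K a₁ b₁ a₂ b₂ lam 1) *
      (algebraMap K (QuatAlg K a₁ b₁ a₂ b₂ lam) (x - z)
        + y • (quatGen K a₁ b₁ a₂ b₂ lam 0 + algebraMap K (QuatAlg K a₁ b₁ a₂ b₂ lam) a₁)
        + w • (quatGen K a₁ b₁ a₂ b₂ lam 1 + algebraMap K (QuatAlg K a₁ b₁ a₂ b₂ lam) a₂))
      = 0 := by
    apply hinj
    rw [map_mul, hφq, hφqbar, map_zero]
    ext i j
    fin_cases i <;> fin_cases j <;>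
      simp [hM1, hM2, qM1, qM2, Matrix.mul_apply, Fin.sum_univ_two, Matrix.add_apply,
        Matrix.smul_apply, Matrix.algebraMap_matrix_apply]
    · linear_combination ((-1)*z + 3*x + pp*w + a₂*w + 2*a₁*y + a₁*rr*w) * hwp
        + (lam*w + 3*b₁*y + b₁*rr*w + a₁*z + a₁*x) * hwr
        + (2*x^2 + lam*y*w + a₂*x*w + 2*b₁*y^2 + a₁*y*z + 2*a₁*x*y) * h2
    · linear_combination (2*lam*w + 2*b₁*y + 2*b₁*rr*w + 4*a₁*x + 2*a₁*pp*w + 2*a₁*a₂*w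
          + 2*a₁^2*y) * hwp + (4*b₁*x + 2*b₁*a₂*w + 2*a₁*b₁*y) * hwr
        + (2*lam*x*w + a₂*lam*w^2 + 4*b₁*x*y + 2*b₁*a₂*y*w + 2*a₁*x*z + 2*a₁*x^2
          + a₁*lam*y*w + a₁*a₂*z*w + a₁*a₂*x*w + 2*a₁*b₁*y^2 + a₁^2*y*z + a₁^2*x*y) * h2
    · linear_combination (2*y + 2*rr*w) * hwp + (4*x + 2*a₂*w + 2*a₁*y) * hwr
        + (4*x*y + 2*a₂*y*w + 2*a₁*y^2) * h2
    · linear_combination ((-1)*z + 3*x + pp*w + 3*a₂*w + 4*a₁*y + a₁*rr*w) * hwp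
        + (lam*w + 3*b₁*y + b₁*rr*w + a₁*z + a₁*x) * hwr
        + (2*x^2 + lam*y*w + 3*a₂*x*w + a₂^2*w^2 + 2*b₁*y^2 + a₁*y*z + 4*a₁*x*y
          + 2*a₁*a₂*y*w + a₁^2*y^2) * h2
  exact ⟨hqne, hmul, fun hdiv =>
    hqbarne ((IsUnit.mul_right_eq_zero (hdiv _ hqne)).mp hmul),
    ⟨AlgEquiv.ofBijective φ ⟨hinj, hsurj⟩⟩⟩
end
end
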